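/- arXiv:2405.06299 — 3 statements merged into one kernel-verified Lean document; each statement's English description precedes it below -/
import Mathlib

section
/- Let (X, 𝒜) be a measurable space, μ and ν probability measures on X, S > 0, and g : X → ℝ measurable with 0 ≤ g(x) ≤ S for all x. Then |∫ g dμ − ∫ g dν| ≤ S · sup_{ι ∈ [0,1]} |μ({x : g(x) > S·ι}) − ν({x : g(x) > S·ι})|. -/
open MeasureTheory

/-- The difference of expectations of a `[0,S]`-valued measurable function under
two probability measures is bounded by `S` times the supremum, over thresholds
`S * ι` with `ι ∈ [0,1]`, of the discrepancy of superlevel-set probabilities. -/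
theorem expectation_gap_le_threshold_discrepancy {X : Type*} [MeasurableSpace X]
    (μ ν : Measure X) [IsProbabilityMeasure μ] [IsProbabilityMeasure ν]
    (S : ℝ) (hS : 0 < S) (g : X → ℝ) (hg : Measurable g)
    (hg0 : ∀ x, 0 ≤ g x) (hgS : ∀ x, g x ≤ S) :
    |∫ x, g x ∂μ - ∫ x, g x ∂ν| ≤
      S * ⨆ ι : Set.Icc (0 : ℝ) 1,
        |(μ {x | g x > S * (ι : ℝ)}).toReal - (ν {x | g x > S * (ι : ℝ)}).toReal| := by
  set C : ℝ := ⨆ ι : Set.Icc (0 : ℝ) 1,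
      |(μ {x | g x > S * (ι : ℝ)}).toReal - (ν {x | g x > S * (ι : ℝ)}).toReal| with hC
  -- integrability of g
  have hint : ∀ (ρ : Measure X) [IsProbabilityMeasure ρ], Integrable g ρ := by
    intro ρ _
    refine (integrable_const S).mono' hg.aestronglyMeasurable ?_
    exact Filter.Eventually.of_forall fun x => by
      rw [Real.norm_eq_abs, abs_of_nonneg (hg0 x)]; exact hgS x
  -- layer cake
  have hlc : ∀ (ρ : Measure X) [IsProbabilityMeasure ρ],
      ∫ x, g x ∂ρ = ∫ t in Set.Ioi (0:ℝ), (ρ {a | t < g a}).toReal := fun ρ _ =>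
    (hint ρ).integral_eq_integral_meas_lt (Filter.Eventually.of_forall hg0)
  set F : ℝ → ℝ := fun t => (μ {a | t < g a}).toReal - (ν {a | t < g a}).toReal with hF
  -- F is measurable (difference of antitone functions)
  have hanti : ∀ (ρ : Measure X) [IsFiniteMeasure ρ],
      Antitone fun t => (ρ {a | t < g a}).toReal := by
    intro ρ _ t s hts
    exact ENNReal.toReal_mono (measure_ne_top ρ _)
      (measure_mono fun a ha => lt_of_le_of_lt hts ha)
  have hmeas : Measurable F :=
    ((hanti μ).measurable).sub ((hanti ν).measurable)
  -- F vanishes beyond S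
  have hvanish : ∀ t, S ≤ t → F t = 0 := by
    intro t ht
    have hempty : {a | t < g a} = (∅ : Set X) := by
      ext a; simp only [Set.mem_setOf_eq, Set.mem_empty_iff_false, iff_false, not_lt]
      exact (hgS a).trans ht
    simp [hF, hempty]
  -- bound |F t| ≤ C for t ∈ Ioc 0 S
  have hbdd : BddAbove (Set.range fun ι : Set.Icc (0:ℝ) 1 =>
      |(μ {x | g x > S * (ι : ℝ)}).toReal - (ν {x | g x > S * (ι : ℝ)}).toReal|) := by
    refine ⟨2, ?_⟩
    rintro _ ⟨ι, rfl⟩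
    have h1 : (μ {x | g x > S * (ι : ℝ)}).toReal ≤ 1 := by
      simpa using ENNReal.toReal_mono (by simp) (prob_le_one (μ := μ))
    have h2 : (ν {x | g x > S * (ι : ℝ)}).toReal ≤ 1 := by
      simpa using ENNReal.toReal_mono (by simp) (prob_le_one (μ := ν))
    have h1' : 0 ≤ (μ {x | g x > S * (ι : ℝ)}).toReal := ENNReal.toReal_nonneg
    have h2' : 0 ≤ (ν {x | g x > S * (ι : ℝ)}).toReal := ENNReal.toReal_nonneg
    rw [abs_sub_le_iff]; constructor <;> linarith
  have hFC : ∀ t ∈ Set.Ioc (0:ℝ) S, |F t| ≤ C := by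
    intro t ht
    have hι : t / S ∈ Set.Icc (0:ℝ) 1 := by
      constructor
      · exact le_of_lt (div_pos ht.1 hS)
      · rw [div_le_one hS]; exact ht.2
    have := le_ciSup hbdd (⟨t / S, hι⟩ : Set.Icc (0:ℝ) 1)
    have hts : S * (t / S) = t := by field_simp
    simpa [hF, hts] using this
  -- integrability of F on Ioc 0 S and Ioi S
  have hFint1 : IntegrableOn F (Set.Ioc 0 S) := by
    refine Integrable.mono' (integrable_const C)
      hmeas.aestronglyMeasurable.restrict ?_
    rw [ae_restrict_iff' measurableSet_Ioc]
    exact Filter.Eventually.of_forall fun t ht => hFC t ht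
  have hFint2 : IntegrableOn F (Set.Ioi S) := by
    refine (integrable_zero _ _ _).congr ?_
    rw [Filter.EventuallyEq, ae_restrict_iff' measurableSet_Ioi]
    exact Filter.Eventually.of_forall fun t ht => (hvanish t (le_of_lt ht)).symm
  have hsplit : Set.Ioi (0:ℝ) = Set.Ioc 0 S ∪ Set.Ioi S := by
    rw [Set.Ioc_union_Ioi_eq_Ioi hS.le]
  have hzero : ∫ t in Set.Ioi S, F t = 0 :=
    setIntegral_eq_zero_of_forall_eq_zero fun t ht => hvanish t (le_of_lt ht)
  have hGint : ∀ (ρ : Measure X) [IsProbabilityMeasure ρ],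
      IntegrableOn (fun t => (ρ {a | t < g a}).toReal) (Set.Ioi (0:ℝ)) := by
    intro ρ _
    rw [hsplit]
    refine IntegrableOn.union ?_ ?_
    · refine Integrable.mono' (integrable_const (1:ℝ))
        (hanti ρ).measurable.aestronglyMeasurable.restrict ?_
      refine Filter.Eventually.of_forall fun t => ?_
      rw [Real.norm_eq_abs, abs_of_nonneg ENNReal.toReal_nonneg]
      simpa using ENNReal.toReal_mono (by simp) (prob_le_one (μ := ρ) (s := {a | t < g a}))
    · refine (integrable_zero _ _ _).congr ?_
      rw [Filter.EventuallyEq, ae_restrict_iff' measurableSet_Ioi]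
      refine Filter.Eventually.of_forall fun t ht => ?_
      have hempty : {a | t < g a} = (∅ : Set X) := by
        ext a
        simp only [Set.mem_setOf_eq, Set.mem_empty_iff_false, iff_false, not_lt]
        exact (hgS a).trans (le_of_lt ht)
      simp [hempty]
  have key : ∫ x, g x ∂μ - ∫ x, g x ∂ν = ∫ t in Set.Ioc 0 S, F t := by
    rw [hlc μ, hlc ν, ← integral_sub (hGint μ) (hGint ν)]
    show ∫ t in Set.Ioi (0:ℝ), F t = _
    rw [hsplit, setIntegral_union (Set.Ioc_disjoint_Ioi le_rfl) measurableSet_Ioi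
      hFint1 hFint2, hzero, add_zero]
  rw [key]
  have hvol : MeasureTheory.volume (Set.Ioc (0:ℝ) S) < ⊤ := by
    rw [Real.volume_Ioc]; exact ENNReal.ofReal_lt_top
  have hb := norm_setIntegral_le_of_norm_le_const (μ := MeasureTheory.volume)
    (s := Set.Ioc (0:ℝ) S) (f := F) (C := C) hvol
    (fun t ht => by simpa [Real.norm_eq_abs] using hFC t ht)
  rw [Real.norm_eq_abs] at hb
  have hvol' : (MeasureTheory.volume (Set.Ioc (0:ℝ) S)).toReal = S := by
    rw [Real.volume_Ioc, ENNReal.toReal_ofReal (by linarith)]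
    ring
  rw [measureReal_def, hvol'] at hb
  linarith [hb]
end

section
/- Let (X, 𝒜) be a measurable space, μ and ν probability measures on X, S > 0, and 𝒳 a set of measurable functions X → ℝ. Let 𝒵 = { 𝟙(|f(x) − f'(x)| > S·ι) : f, f' ∈ 𝒳, ι ∈ [0,1] } be the induced class of threshold functions, and d_𝒵(μ, ν) = sup_{ζ ∈ 𝒵} |∫ ζ dμ − ∫ ζ dν|. Suppose that for all f, f' ∈ 𝒳 and all x ∈ X one has |f(x) − f'(x)| ≤ S, and that x ↦ |f(x) − f'(x)| is measurable for all f, f' ∈ 𝒳. Then for all f, f' ∈ 𝒳: |∫ |f − f'| dμ − ∫ |f − f'| dν| ≤ S · d_𝒵(μ, ν). -/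
open MeasureTheory

lemma integral_if_lt {X : Type*} [MeasurableSpace X] (μ : Measure X)
    (h : X → ℝ) (hh : Measurable h) (c : ℝ) :
    ∫ x, (if c < h x then (1 : ℝ) else 0) ∂μ = (μ {x | c < h x}).toReal := by
  have : (fun x => if c < h x then (1 : ℝ) else 0)
      = Set.indicator {x | c < h x} (fun _ => (1 : ℝ)) := by
    ext x
    by_cases hx : c < h x <;> simp [Set.indicator_apply, hx]
  rw [this, integral_indicator_const (1 : ℝ) (measurableSet_lt measurable_const hh)]
  simp
  rfl

lemma gap_aux {X : Type*} [MeasurableSpace X]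
    (μ ν : Measure X) [IsProbabilityMeasure μ] [IsProbabilityMeasure ν]
    (S : ℝ) (hS : 0 < S) (g : X → ℝ) (hg : Measurable g)
    (hgnn : ∀ x, 0 ≤ g x) (hgbd : ∀ x, g x ≤ S) (D : ℝ)
    (hkey : ∀ t ∈ Set.Ioc (0:ℝ) S,
      |(μ {a | t < g a}).toReal - (ν {a | t < g a}).toReal| ≤ D) :
    |∫ x, g x ∂μ - ∫ x, g x ∂ν| ≤ S * D := by
  have hint : ∀ (κ : Measure X), IsProbabilityMeasure κ → Integrable g κ := by
    intro κ hκ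
    refine Integrable.mono' (integrable_const S) hg.aestronglyMeasurable ?_
    filter_upwards with x
    rw [Real.norm_eq_abs, abs_of_nonneg (hgnn x)]
    exact hgbd x
  have hlayer : ∀ (κ : Measure X), IsProbabilityMeasure κ →
      ∫ x, g x ∂κ = ∫ t in Set.Ioc (0:ℝ) S, (κ {a | t < g a}).toReal := by
    intro κ hκ
    rw [Integrable.integral_eq_integral_meas_lt (hint κ hκ)
      (Filter.Eventually.of_forall hgnn)]
    refine (setIntegral_eq_of_subset_of_forall_diff_eq_zero (μ := volume)
      (f := fun t => (κ {a | t < g a}).toReal) (s := Set.Ioc 0 S) (t := Set.Ioi 0)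
      measurableSet_Ioi Set.Ioc_subset_Ioi_self ?_)
    intro t ht
    have hSt : S < t := by
      rcases ht with ⟨ht1, ht2⟩
      simp only [Set.mem_Ioc, not_and, not_le] at ht2
      exact ht2 ht1
    have : {a | t < g a} = ∅ := by
      ext a
      simp only [Set.mem_setOf_eq, Set.mem_empty_iff_false, iff_false, not_lt]
      exact (hgbd a).trans hSt.le
    simp [this]
  have hFint : ∀ (κ : Measure X), IsProbabilityMeasure κ →
      IntegrableOn (fun t => (κ {a | t < g a}).toReal) (Set.Ioc (0:ℝ) S) := by
    intro κ hκ
    have hanti : Antitone (fun t => (κ {a | t < g a}).toReal) := by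
      intro s t hst
      apply ENNReal.toReal_mono (measure_ne_top κ _)
      exact measure_mono (fun a ha => lt_of_le_of_lt hst ha)
    refine Measure.integrableOn_of_bounded (M := 1) (by simp)
      hanti.measurable.aestronglyMeasurable ?_
    filter_upwards with t
    rw [Real.norm_eq_abs, abs_of_nonneg ENNReal.toReal_nonneg]
    exact ENNReal.toReal_le_of_le_ofReal zero_le_one (by simpa using prob_le_one)
  rw [hlayer μ inferInstance, hlayer ν inferInstance,
    ← integral_sub (hFint μ inferInstance) (hFint ν inferInstance)]
  have hvol : (volume (Set.Ioc (0:ℝ) S)).toReal = S := by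
    simp [Real.volume_Ioc, hS.le]
  calc |∫ t in Set.Ioc (0:ℝ) S,
        ((μ {a | t < g a}).toReal - (ν {a | t < g a}).toReal)|
      ≤ D * (volume (Set.Ioc (0:ℝ) S)).toReal := by
        rw [← Real.norm_eq_abs]
        apply norm_setIntegral_le_of_norm_le_const (by simp)
        · intro t ht
          rw [Real.norm_eq_abs]
          exact hkey t ht
    _ = S * D := by rw [hvol, mul_comm]

/-- The gap, between two probability measures, of the expected `L¹` disagreement
of two feasible functions `f, f' ∈ 𝒳` (whose pointwise disagreement is at most
`S`) is bounded by `S` times the `ℋ`-divergence over the induced class of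
threshold functions `𝟙(|f − f'| > S·ι)`, `f, f' ∈ 𝒳`, `ι ∈ [0,1]`. -/
theorem disagreement_gap_le_H_divergence {X : Type*} [MeasurableSpace X]
    (μ ν : Measure X) [IsProbabilityMeasure μ] [IsProbabilityMeasure ν]
    (S : ℝ) (hS : 0 < S) (𝒳 : Set (X → ℝ))
    (hmeas : ∀ f ∈ 𝒳, ∀ f' ∈ 𝒳, Measurable fun x => |f x - f' x|)
    (hbd : ∀ f ∈ 𝒳, ∀ f' ∈ 𝒳, ∀ x, |f x - f' x| ≤ S) :
    ∀ f ∈ 𝒳, ∀ f' ∈ 𝒳,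
      |∫ x, |f x - f' x| ∂μ - ∫ x, |f x - f' x| ∂ν| ≤
        S * ⨆ ζ : {ζ : X → ℝ | ∃ f₁ ∈ 𝒳, ∃ f₂ ∈ 𝒳, ∃ ι ∈ Set.Icc (0 : ℝ) 1,
              ζ = fun x => if S * ι < |f₁ x - f₂ x| then (1 : ℝ) else 0},
            |∫ x, ζ.1 x ∂μ - ∫ x, ζ.1 x ∂ν| := by
  intro f hf f' hf'
  have hg : Measurable fun x => |f x - f' x| := hmeas f hf f' hf'
  refine gap_aux μ ν S hS _ hg (fun x => abs_nonneg _) (hbd f hf f' hf') _ ?_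
  intro t ht
  have hbdd : BddAbove (Set.range fun ζ : {ζ : X → ℝ | ∃ f₁ ∈ 𝒳, ∃ f₂ ∈ 𝒳,
      ∃ ι ∈ Set.Icc (0 : ℝ) 1,
      ζ = fun x => if S * ι < |f₁ x - f₂ x| then (1 : ℝ) else 0} =>
      |∫ x, ζ.1 x ∂μ - ∫ x, ζ.1 x ∂ν|) := by
    refine ⟨2, ?_⟩
    rintro r ⟨⟨ζ, f₁, hf₁, f₂, hf₂, ι, hι, hζ⟩, rfl⟩
    simp only
    have h1 : ∫ x, ζ x ∂μ = (μ {x | S * ι < |f₁ x - f₂ x|}).toReal := by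
      rw [hζ]; exact integral_if_lt μ _ (hmeas f₁ hf₁ f₂ hf₂) _
    have h2 : ∫ x, ζ x ∂ν = (ν {x | S * ι < |f₁ x - f₂ x|}).toReal := by
      rw [hζ]; exact integral_if_lt ν _ (hmeas f₁ hf₁ f₂ hf₂) _
    rw [h1, h2]
    have hμ1 : (μ {x | S * ι < |f₁ x - f₂ x|}).toReal ≤ 1 :=
      ENNReal.toReal_le_of_le_ofReal zero_le_one (by simpa using prob_le_one)
    have hν1 : (ν {x | S * ι < |f₁ x - f₂ x|}).toReal ≤ 1 :=
      ENNReal.toReal_le_of_le_ofReal zero_le_one (by simpa using prob_le_one)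
    have hμ0 : 0 ≤ (μ {x | S * ι < |f₁ x - f₂ x|}).toReal := ENNReal.toReal_nonneg
    have hν0 : 0 ≤ (ν {x | S * ι < |f₁ x - f₂ x|}).toReal := ENNReal.toReal_nonneg
    rw [abs_sub_le_iff]
    constructor <;> linarith
  have hι : t / S ∈ Set.Icc (0:ℝ) 1 := by
    constructor
    · exact div_nonneg ht.1.le hS.le
    · rw [div_le_one hS]; exact ht.2
  have hmem : (fun x => if S * (t / S) < |f x - f' x| then (1:ℝ) else 0) ∈
      {ζ : X → ℝ | ∃ f₁ ∈ 𝒳, ∃ f₂ ∈ 𝒳, ∃ ι ∈ Set.Icc (0 : ℝ) 1,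
        ζ = fun x => if S * ι < |f₁ x - f₂ x| then (1 : ℝ) else 0} :=
    ⟨f, hf, f', hf', t / S, hι, rfl⟩
  have hrw : S * (t / S) = t := by field_simp
  have h1 : ∫ x, (if S * (t / S) < |f x - f' x| then (1:ℝ) else 0) ∂μ
      = (μ {a | t < |f a - f' a|}).toReal := by
    rw [integral_if_lt μ _ hg, hrw]
  have h2 : ∫ x, (if S * (t / S) < |f x - f' x| then (1:ℝ) else 0) ∂ν
      = (ν {a | t < |f a - f' a|}).toReal := by
    rw [integral_if_lt ν _ hg, hrw]
  have := le_ciSup hbdd ⟨_, hmem⟩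
  simpa only [h1, h2] using this
end

section
/- Let (X, 𝒜) be a measurable space, μ_src and μ_tgt probability measures on X (the source and target domains), y : X → ℝ a measurable labeling function, and S > 0. Let 𝒳 be a set of measurable functions X → ℝ such that for every f ∈ 𝒳 and every x ∈ X, |f(x) − y(x)| ≤ S, and such that |f(x) − f'(x)| ≤ S for all f, f' ∈ 𝒳 and x ∈ X. Define the expected errors ε_src(f) = ∫ |f − y| dμ_src and ε_tgt(f) = ∫ |f − y| dμ_tgt, let 𝒵 = { 𝟙(|f(x) − f'(x)| > S·ι) : f, f' ∈ 𝒳, ι ∈ [0,1] } and d_𝒵(μ, ν) = sup_{ζ ∈ 𝒵} |∫ ζ dμ − ∫ ζ dν|. Then for every f ∈ 𝒳 and every f* ∈ 𝒳: ε_tgt(f) ≤ ε_src(f) + S · d_𝒵(μ_src, μ_tgt) + ε_tgt(f*) + ε_src(f*). -/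
open MeasureTheory

private lemma aux_integrable {X : Type*} [MeasurableSpace X] (μ : Measure X)
    [IsProbabilityMeasure μ] {g : X → ℝ} (hg : Measurable g) {S : ℝ}
    (hb : ∀ x, |g x| ≤ S) : Integrable g μ :=
  Integrable.mono' (integrable_const S) hg.aestronglyMeasurable
    (Filter.Eventually.of_forall hb)

private lemma aux_indicator_integral {X : Type*} [MeasurableSpace X] (μ : Measure X)
    {g : X → ℝ} (hg : Measurable g) (t : ℝ) :
    ∫ x, (if t < g x then (1:ℝ) else 0) ∂μ = (μ {x | t < g x}).toReal := by
  change _ = μ.real {x | t < g x}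
  rw [← integral_indicator_one (measurableSet_lt measurable_const hg)]
  congr 1

private lemma aux_layer {X : Type*} [MeasurableSpace X] (μ : Measure X)
    [IsProbabilityMeasure μ] {g : X → ℝ} (hg : Measurable g) {S : ℝ}
    (hnn : ∀ x, 0 ≤ g x) (hb : ∀ x, g x ≤ S) :
    ∫ x, g x ∂μ = ∫ t in Set.Ioc 0 S, (μ {x | t < g x}).toReal := by
  have hint : Integrable g μ := aux_integrable μ hg
    (fun x => by rw [abs_of_nonneg (hnn x)]; exact hb x)
  rw [hint.integral_eq_integral_meas_lt (Filter.Eventually.of_forall hnn)]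
  change ∫ t in Set.Ioi 0, (μ {x | t < g x}).toReal = _
  rw [setIntegral_eq_of_subset_of_ae_diff_eq_zero measurableSet_Ioi.nullMeasurableSet
      Set.Ioc_subset_Ioi_self ?_]
  refine Filter.Eventually.of_forall fun t ht => ?_
  have htS : S < t := by
    simp only [Set.mem_diff, Set.mem_Ioi, Set.mem_Ioc, not_and, not_le] at ht
    exact ht.2 ht.1
  have : μ {x | t < g x} = 0 := by
    convert measure_empty (μ := μ)
    ext x; simp only [Set.mem_setOf_eq, Set.mem_empty_iff_false, iff_false, not_lt]
    exact le_trans (hb x) htS.le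
  simp [this]

private lemma aux_tail_integrable {X : Type*} [MeasurableSpace X] (μ : Measure X)
    [IsProbabilityMeasure μ] {g : X → ℝ} {S : ℝ} :
    IntegrableOn (fun t => (μ {x | t < g x}).toReal) (Set.Ioc 0 S) volume := by
  refine Measure.integrableOn_of_bounded (M := 1) measure_Ioc_lt_top.ne ?_ ?_
  · refine (Measurable.ennreal_toReal ?_).aestronglyMeasurable
    exact Antitone.measurable (fun s t hst => measure_mono (fun x h => lt_of_le_of_lt hst h))
  · refine Filter.Eventually.of_forall fun t => ?_
    rw [Real.norm_eq_abs, abs_of_nonneg ENNReal.toReal_nonneg]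
    exact ENNReal.toReal_le_of_le_ofReal zero_le_one (by simpa using prob_le_one)

private lemma aux_div_bound {X : Type*} [MeasurableSpace X] (μ ν : Measure X)
    [IsProbabilityMeasure μ] [IsProbabilityMeasure ν] (g : X → ℝ) (S D : ℝ)
    (hkey : ∀ t ∈ Set.Ioc 0 S, |(μ {x | t < g x}).toReal - (ν {x | t < g x}).toReal| ≤ D) :
    |∫ t in Set.Ioc 0 S, ((ν {x | t < g x}).toReal - (μ {x | t < g x}).toReal)| ≤
      D * (volume (Set.Ioc (0:ℝ) S)).toReal := by
  have hmble : AEStronglyMeasurable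
      (fun t => (ν {x | t < g x}).toReal - (μ {x | t < g x}).toReal)
      (volume.restrict (Set.Ioc (0:ℝ) S)) := by
    apply Measurable.aestronglyMeasurable
    apply Measurable.sub
    · exact Measurable.ennreal_toReal (Antitone.measurable
        (fun s t hst => measure_mono (fun x h => lt_of_le_of_lt hst h)))
    · exact Measurable.ennreal_toReal (Antitone.measurable
        (fun s t hst => measure_mono (fun x h => lt_of_le_of_lt hst h)))
  have hb := norm_setIntegral_le_of_norm_le_const (μ := volume)
    (s := Set.Ioc (0:ℝ) S)
    (f := fun t => (ν {x | t < g x}).toReal - (μ {x | t < g x}).toReal)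
    (C := D) measure_Ioc_lt_top
    (fun t ht => by rw [Real.norm_eq_abs, abs_sub_comm]; exact hkey t ht)
  rwa [Real.norm_eq_abs] at hb

set_option maxHeartbeats 1000000 in
/-- Population core of the domain-adaptation bound: the target-domain expected
error of `f ∈ 𝒳` is bounded by its source-domain expected error, plus `S` times
the `ℋ`-divergence between source and target over the induced threshold class,
plus the combined source-and-target error of any reference `f* ∈ 𝒳`. -/
theorem target_error_bound_with_reference {X : Type*} [MeasurableSpace X]
    (μsrc μtgt : Measure X) [IsProbabilityMeasure μsrc] [IsProbabilityMeasure μtgt]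
    (y : X → ℝ) (hy : Measurable y)
    (S : ℝ) (hS : 0 < S) (𝒳 : Set (X → ℝ))
    (hXmeas : ∀ f ∈ 𝒳, Measurable f)
    (hfy : ∀ f ∈ 𝒳, ∀ x, |f x - y x| ≤ S)
    (hff : ∀ f ∈ 𝒳, ∀ f' ∈ 𝒳, ∀ x, |f x - f' x| ≤ S) :
    ∀ f ∈ 𝒳, ∀ fstar ∈ 𝒳,
      ∫ x, |f x - y x| ∂μtgt ≤
        ∫ x, |f x - y x| ∂μsrc +
        S * (⨆ ζ : {ζ : X → ℝ | ∃ f₁ ∈ 𝒳, ∃ f₂ ∈ 𝒳, ∃ ι ∈ Set.Icc (0 : ℝ) 1,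
               ζ = fun x => if S * ι < |f₁ x - f₂ x| then (1 : ℝ) else 0},
             |∫ x, ζ.1 x ∂μsrc - ∫ x, ζ.1 x ∂μtgt|) +
        ∫ x, |fstar x - y x| ∂μtgt + ∫ x, |fstar x - y x| ∂μsrc := by
  intro f hf fstar hfs
  set Z : Set (X → ℝ) := {ζ : X → ℝ | ∃ f₁ ∈ 𝒳, ∃ f₂ ∈ 𝒳, ∃ ι ∈ Set.Icc (0 : ℝ) 1,
      ζ = fun x => if S * ι < |f₁ x - f₂ x| then (1 : ℝ) else 0} with hZ
  set D : ℝ := ⨆ ζ : Z, |∫ x, ζ.1 x ∂μsrc - ∫ x, ζ.1 x ∂μtgt| with hD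
  -- measurability
  have hfm := hXmeas f hf
  have hfsm := hXmeas fstar hfs
  set g : X → ℝ := fun x => |f x - fstar x| with hg
  have hgm : Measurable g := (hfm.sub hfsm).abs
  have hgnn : ∀ x, 0 ≤ g x := fun x => abs_nonneg _
  have hgb : ∀ x, g x ≤ S := fun x => hff f hf fstar hfs x
  -- bounded above
  have hbdd : BddAbove (Set.range fun ζ : Z => |∫ x, ζ.1 x ∂μsrc - ∫ x, ζ.1 x ∂μtgt|) := by
    refine ⟨2, ?_⟩
    rintro _ ⟨ζ, rfl⟩
    have hmub : ∀ (μ : Measure X) [IsProbabilityMeasure μ], |∫ x, ζ.1 x ∂μ| ≤ 1 := by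
      intro μ _
      obtain ⟨f₁, -, f₂, -, ι, -, hζ⟩ := ζ.2
      rw [← Real.norm_eq_abs]
      have := norm_integral_le_of_norm_le_const (μ := μ) (f := ζ.1) (C := 1)
        (Filter.Eventually.of_forall fun x => by
          rw [hζ]; dsimp only; split <;> simp)
      simpa using this
    calc |∫ x, ζ.1 x ∂μsrc - ∫ x, ζ.1 x ∂μtgt|
        ≤ |∫ x, ζ.1 x ∂μsrc| + |∫ x, ζ.1 x ∂μtgt| := abs_sub _ _
      _ ≤ 1 + 1 := add_le_add (hmub μsrc) (hmub μtgt)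
      _ = 2 := by norm_num
  -- pointwise bound on the tail-probability difference
  have hkey : ∀ t ∈ Set.Ioc 0 S,
      |(μsrc {x | t < g x}).toReal - (μtgt {x | t < g x}).toReal| ≤ D := by
    intro t ht
    set ζf : X → ℝ := fun x => if t < g x then (1:ℝ) else 0 with hζf
    have hmem : ζf ∈ Z := by
      refine ⟨f, hf, fstar, hfs, t / S, ⟨div_nonneg ht.1.le hS.le,
        (div_le_one hS).2 ht.2⟩, ?_⟩
      rw [hζf, mul_div_cancel₀ _ hS.ne']
    have := le_ciSup hbdd ⟨ζf, hmem⟩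
    rwa [aux_indicator_integral μsrc hgm t, aux_indicator_integral μtgt hgm t] at this
  -- the divergence bound on ∫ g
  have hdiff : ∫ x, g x ∂μtgt - ∫ x, g x ∂μsrc ≤ S * D := by
    rw [aux_layer μtgt hgm hgnn hgb, aux_layer μsrc hgm hgnn hgb,
      ← integral_sub (aux_tail_integrable μtgt) (aux_tail_integrable μsrc)]
    have hb := aux_div_bound μsrc μtgt g S D hkey
    have hvol : (volume (Set.Ioc (0:ℝ) S)).toReal = S := by
      rw [Real.volume_Ioc]; simp [hS.le]
    calc (∫ t in Set.Ioc 0 S, ((μtgt {x | t < g x}).toReal - (μsrc {x | t < g x}).toReal))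
        ≤ |∫ t in Set.Ioc 0 S, ((μtgt {x | t < g x}).toReal - (μsrc {x | t < g x}).toReal)| :=
          le_abs_self _
      _ ≤ D * (volume (Set.Ioc (0:ℝ) S)).toReal := hb
      _ = S * D := by rw [hvol, mul_comm]
  -- triangle inequalities
  have hintfy : Integrable (fun x => |f x - y x|) μtgt :=
    aux_integrable μtgt (hfm.sub hy).abs (fun x => by rw [abs_abs]; exact hfy f hf x)
  have hintsy : Integrable (fun x => |fstar x - y x|) μtgt :=
    aux_integrable μtgt (hfsm.sub hy).abs (fun x => by rw [abs_abs]; exact hfy fstar hfs x)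
  have hintfy' : Integrable (fun x => |f x - y x|) μsrc :=
    aux_integrable μsrc (hfm.sub hy).abs (fun x => by rw [abs_abs]; exact hfy f hf x)
  have hintsy' : Integrable (fun x => |fstar x - y x|) μsrc :=
    aux_integrable μsrc (hfsm.sub hy).abs (fun x => by rw [abs_abs]; exact hfy fstar hfs x)
  have hintg : Integrable g μtgt :=
    aux_integrable μtgt hgm (fun x => by rw [abs_abs]; exact hgb x)
  have hintg' : Integrable g μsrc :=
    aux_integrable μsrc hgm (fun x => by rw [abs_abs]; exact hgb x)
  have htri1 : ∫ x, |f x - y x| ∂μtgt ≤ ∫ x, g x ∂μtgt + ∫ x, |fstar x - y x| ∂μtgt := by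
    rw [← integral_add hintg hintsy]
    refine integral_mono hintfy (hintg.add hintsy) fun x => ?_
    exact abs_sub_le (f x) (fstar x) (y x)
  have htri2 : ∫ x, g x ∂μsrc ≤ ∫ x, |f x - y x| ∂μsrc + ∫ x, |fstar x - y x| ∂μsrc := by
    rw [← integral_add hintfy' hintsy']
    refine integral_mono hintg' (hintfy'.add hintsy') fun x => ?_
    calc |f x - fstar x| ≤ |f x - y x| + |y x - fstar x| := abs_sub_le _ _ _
      _ = |f x - y x| + |fstar x - y x| := by rw [abs_sub_comm (y x)]
  linarith
end
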